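/- Let 0 < k < 1, k' = √(1 − k²), l = (1 − k')/(1 + k'), and M = 1/(1 + k'). Then K(k) = 2 M K(l), where K is the complete elliptic integral of the first kind. -/

import Mathlib

/-!
The substitution `t = (1 + x) s / (1 + x s²)` maps `(0, 1)` increasingly onto itself, and when
`k² = 4x / (1 + x)²` it factors `(1 - k²t²)(1 - t²)` as a perfect square times
`(1 - x²s²)(1 - s²)`; the square cancels against the Jacobian, leaving `K(k) = (1 + x) K(x)`.
For `x = (1 - k')/(1 + k')` one checks `k² = 4x / (1 + x)²` and `1 + x = 2/(1 + k')`.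
-/

/-- The complete elliptic integral of the first kind. -/
noncomputable def ellipticK (l : ℝ) : ℝ :=
  ∫ t in (0:ℝ)..1, 1 / Real.sqrt ((1 - l ^ 2 * t ^ 2) * (1 - t ^ 2))

open Real MeasureTheory Set

noncomputable def ellipticIntegrand (k t : ℝ) : ℝ :=
  1 / √((1 - k ^ 2 * t ^ 2) * (1 - t ^ 2))

theorem ellipticK_eq_setIntegral_Ioo (k : ℝ) :
    ellipticK k = ∫ t in Ioo 0 1, ellipticIntegrand k t := by
  rw [ellipticK, intervalIntegral.integral_of_le zero_le_one, integral_Ioc_eq_integral_Ioo]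
  rfl

noncomputable def landenMap (x s : ℝ) : ℝ :=
  (1 + x) * s / (1 + x * s ^ 2)

section landenMap

variable {x : ℝ}

theorem hasDerivAt_landenMap (hx : 0 ≤ x) (s : ℝ) :
    HasDerivAt (landenMap x) ((1 + x) * (1 - x * s ^ 2) / (1 + x * s ^ 2) ^ 2) s := by
  have hnum : HasDerivAt (fun s : ℝ => (1 + x) * s) (1 + x) s := by
    simpa using (hasDerivAt_id s).const_mul (1 + x)
  have hden : HasDerivAt (fun s : ℝ => 1 + x * s ^ 2) (x * (2 * s)) s := by
    simpa using ((hasDerivAt_pow 2 s).const_mul x).const_add 1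
  exact (hnum.div hden (by positivity)).congr_deriv (by ring)

theorem strictMonoOn_landenMap (hx0 : 0 ≤ x) (hx1 : x < 1) :
    StrictMonoOn (landenMap x) (Icc 0 1) := by
  refine strictMonoOn_of_deriv_pos (convex_Icc 0 1)
    (fun s _ => (hasDerivAt_landenMap hx0 s).continuousAt.continuousWithinAt) fun s hs => ?_
  rw [interior_Icc] at hs
  have : 0 < 1 - x * s ^ 2 := by nlinarith [hs.1, hs.2]
  rw [(hasDerivAt_landenMap hx0 s).deriv]
  positivity

theorem landenMap_image_Ioo (hx0 : 0 ≤ x) (hx1 : x < 1) :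
    landenMap x '' Ioo 0 1 = Ioo 0 1 := by
  have hmono := strictMonoOn_landenMap hx0 hx1
  have h0 : landenMap x 0 = 0 := by simp [landenMap]
  have h1 : landenMap x 1 = 1 := by simp [landenMap, div_self (by linarith : 1 + x ≠ 0)]
  refine (image_subset_iff.2 fun s hs => ?_).antisymm ?_
  · have hs' : s ∈ Icc (0 : ℝ) 1 := Ioo_subset_Icc_self hs
    rw [mem_preimage, ← h0, ← h1]
    exact ⟨hmono (left_mem_Icc.2 zero_le_one) hs' hs.1,
      hmono hs' (right_mem_Icc.2 zero_le_one) hs.2⟩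
  · simpa [h0, h1] using intermediate_value_Ioo zero_le_one
      (fun s _ => (hasDerivAt_landenMap hx0 s).continuousAt.continuousWithinAt)

theorem landenMap_factorization (hx : 0 ≤ x) (s : ℝ) :
    (1 - 4 * x / (1 + x) ^ 2 * landenMap x s ^ 2) * (1 - landenMap x s ^ 2)
      = ((1 - x * s ^ 2) / (1 + x * s ^ 2) ^ 2) ^ 2 * ((1 - x ^ 2 * s ^ 2) * (1 - s ^ 2)) := by
  have : 0 < 1 + x * s ^ 2 := by positivity
  have : 0 < 1 + x := by linarith
  unfold landenMap
  field_simp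
  ring

theorem abs_deriv_mul_ellipticIntegrand_landenMap {k s : ℝ} (hx0 : 0 ≤ x) (hx1 : x < 1)
    (hk : k ^ 2 = 4 * x / (1 + x) ^ 2) (hs : s ∈ Ioo 0 1) :
    |(1 + x) * (1 - x * s ^ 2) / (1 + x * s ^ 2) ^ 2| * ellipticIntegrand k (landenMap x s)
      = (1 + x) * ellipticIntegrand x s := by
  obtain ⟨hs0, hs1⟩ := hs
  have : 0 < 1 - x * s ^ 2 := by nlinarith
  have : 0 < (1 - x ^ 2 * s ^ 2) * (1 - s ^ 2) := mul_pos (by nlinarith) (by nlinarith)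
  have : 0 < √((1 - x ^ 2 * s ^ 2) * (1 - s ^ 2)) := sqrt_pos.2 this
  rw [ellipticIntegrand, ellipticIntegrand, hk, landenMap_factorization hx0,
    sqrt_mul (sq_nonneg _), sqrt_sq (by positivity), abs_of_nonneg (by positivity)]
  field_simp

end landenMap

theorem ellipticK_eq_one_add_mul_ellipticK {k x : ℝ} (hx0 : 0 ≤ x) (hx1 : x < 1)
    (hk : k ^ 2 = 4 * x / (1 + x) ^ 2) :
    ellipticK k = (1 + x) * ellipticK x := by
  calc ellipticK k = ∫ t in landenMap x '' Ioo 0 1, ellipticIntegrand k t := by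
        rw [landenMap_image_Ioo hx0 hx1, ellipticK_eq_setIntegral_Ioo]
    _ = ∫ s in Ioo 0 1, |(1 + x) * (1 - x * s ^ 2) / (1 + x * s ^ 2) ^ 2|
          • ellipticIntegrand k (landenMap x s) :=
        integral_image_eq_integral_abs_deriv_smul measurableSet_Ioo
          (fun s _ => (hasDerivAt_landenMap hx0 s).hasDerivWithinAt)
          ((strictMonoOn_landenMap hx0 hx1).injOn.mono Ioo_subset_Icc_self) _
    _ = ∫ s in Ioo 0 1, (1 + x) * ellipticIntegrand x s :=
        setIntegral_congr_fun measurableSet_Ioo fun s hs =>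
          abs_deriv_mul_ellipticIntegrand_landenMap hx0 hx1 hk hs
    _ = (1 + x) * ellipticK x := by rw [integral_const_mul, ellipticK_eq_setIntegral_Ioo]

/-- **Landen's transformation** (first half): for `0 < k < 1`, with
`k' = √(1 − k²)`, `l = (1 − k')/(1 + k')` and `M = 1/(1 + k')`, one has
`K(k) = 2 M K(l)`. -/
theorem landen_K (k : ℝ) (hk0 : 0 < k) (hk1 : k < 1) :
    ellipticK k
      = 2 * (1 / (1 + Real.sqrt (1 - k ^ 2)))
        * ellipticK ((1 - Real.sqrt (1 - k ^ 2)) / (1 + Real.sqrt (1 - k ^ 2))) := by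
  set k' := √(1 - k ^ 2)
  have hk'0 : 0 < k' := sqrt_pos.2 (by nlinarith)
  have hk'1 : k' ≤ 1 := sqrt_le_one.2 (by nlinarith)
  have hk'sq : k' ^ 2 = 1 - k ^ 2 := sq_sqrt (by nlinarith)
  have hM : 2 * (1 / (1 + k')) = 1 + (1 - k') / (1 + k') := by
    field_simp
    ring
  rw [hM]
  refine ellipticK_eq_one_add_mul_ellipticK (div_nonneg (by linarith) (by linarith))
    ((div_lt_one (by linarith)).2 (by linarith)) ?_
  field_simp
  linear_combination (4 : ℝ) * hk'sq
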